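/- arXiv:2405.13763 — 2 statements merged into one kernel-verified Lean document; each statement's English description precedes it below -/
import Mathlib

section
/- Let 0 ≤ β < α ≤ 1 be real and set c_m = Σ_{i=0}^{m} α^{m−i} r_{m−i} r_i β^i. Then for every integer j ≥ 1: if α = 1 then log(j+1)/4 ≤ Σ_{i=0}^{j−1} c_i² ≤ (1 + log j)/(1 − β)², and if α < 1 then 1 ≤ Σ_{i=0}^{j−1} c_i² ≤ (1/(α − β)²)·log(1/(1 − α²)). Here log denotes the natural logarithm. -/
open Finset Real

/-- `r_m = (1/4^m)·C(2m,m)`. -/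
noncomputable def rCoef (m : ℕ) : ℝ := (1 / 4 ^ m) * (Nat.choose (2 * m) m : ℝ)

/-- `c_m = Σ_{i=0}^{m} α^{m−i} r_{m−i} r_i β^i`. -/
noncomputable def cCoef (α β : ℝ) (m : ℕ) : ℝ :=
  ∑ i ∈ Finset.range (m + 1), α ^ (m - i) * rCoef (m - i) * rCoef i * β ^ i

/-!
Since `r_a r_b ≤ r_{a+b}` (the ratio `r_{m+1}/r_m = (2m+1)/(2m+2)` increases with `m`), each term
of `c_m` is at most `r_m α^{m-i} β^i`, and the geometric sum gives `c_m ≤ r_m α^{m+1}/(α-β)`.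
Together with `r_m² ≤ 1/(m+1)` this dominates `∑ c_i²` by `(α-β)⁻²` times a partial sum of
`∑ (α²)^(i+1)/(i+1) = -log(1-α²)`, which for `α = 1` is a harmonic number. The lower bounds come
from `c_0 = 1` and, for `α = 1`, from `c_m ≥ r_m` and `r_m² ≥ 1/(4m+1)`.
-/

lemma rCoef_zero : rCoef 0 = 1 := by simp [rCoef]

lemma rCoef_pos (m : ℕ) : 0 < rCoef m := by
  unfold rCoef
  have := Nat.choose_pos (Nat.le_mul_of_pos_left m two_pos)
  positivity

lemma rCoef_succ (m : ℕ) : rCoef (m + 1) = rCoef m * ((2 * m + 1) / (2 * m + 2)) := by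
  have h : ((m : ℝ) + 1) * ((2 * (m + 1)).choose (m + 1) : ℝ)
      = 2 * (2 * (m : ℝ) + 1) * ((2 * m).choose m : ℝ) := by
    simpa [Nat.centralBinom_eq_two_mul_choose] using
      congrArg (Nat.cast (R := ℝ)) (Nat.succ_mul_centralBinom_succ m)
  unfold rCoef
  field_simp
  rw [pow_succ]
  linear_combination (2 * 4 ^ m : ℝ) * h

lemma rCoef_mul_le (a b : ℕ) : rCoef a * rCoef b ≤ rCoef (a + b) := by
  induction b with
  | zero => simp [rCoef_zero]
  | succ b ih =>
    have hratio : (2 * (b : ℝ) + 1) / (2 * b + 2) ≤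
        (2 * ((a + b : ℕ) : ℝ) + 1) / (2 * (a + b : ℕ) + 2) := by
      rw [div_le_div_iff₀ (by positivity) (by positivity)]
      push_cast
      nlinarith [(a.cast_nonneg : (0 : ℝ) ≤ a), (b.cast_nonneg : (0 : ℝ) ≤ b)]
    rw [← add_assoc, rCoef_succ, rCoef_succ, ← mul_assoc]
    exact mul_le_mul ih hratio (by positivity) (rCoef_pos _).le

lemma rCoef_sq_le_inv_succ (m : ℕ) : rCoef m ^ 2 ≤ ((m : ℝ) + 1)⁻¹ := by
  induction m with
  | zero => simp [rCoef_zero]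
  | succ m ih =>
    have hm : (0 : ℝ) ≤ m := m.cast_nonneg
    rw [rCoef_succ, mul_pow]
    calc rCoef m ^ 2 * ((2 * (m : ℝ) + 1) / (2 * m + 2)) ^ 2
        ≤ ((m : ℝ) + 1)⁻¹ * ((2 * (m : ℝ) + 1) / (2 * m + 2)) ^ 2 := by gcongr
      _ ≤ ((m + 1 : ℕ) + 1 : ℝ)⁻¹ := by
        rw [div_pow, ← div_eq_inv_mul, div_div, ← one_div,
          div_le_div_iff₀ (by positivity) (by positivity)]
        push_cast
        nlinarith

lemma inv_four_mul_add_one_le_rCoef_sq (m : ℕ) : (4 * (m : ℝ) + 1)⁻¹ ≤ rCoef m ^ 2 := by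
  induction m with
  | zero => simp [rCoef_zero]
  | succ m ih =>
    have hm : (0 : ℝ) ≤ m := m.cast_nonneg
    rw [rCoef_succ, mul_pow]
    calc (4 * ((m + 1 : ℕ) : ℝ) + 1)⁻¹
        ≤ (4 * (m : ℝ) + 1)⁻¹ * ((2 * (m : ℝ) + 1) / (2 * m + 2)) ^ 2 := by
          rw [div_pow, ← div_eq_inv_mul, div_div, ← one_div,
            div_le_div_iff₀ (by positivity) (by positivity)]
          push_cast
          nlinarith
      _ ≤ rCoef m ^ 2 * ((2 * (m : ℝ) + 1) / (2 * m + 2)) ^ 2 := by gcongr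

lemma sum_range_inv_succ_eq_harmonic (n : ℕ) : ∑ i ∈ range n, ((i : ℝ) + 1)⁻¹ = harmonic n := by
  simp [harmonic]

lemma cCoef_zero (α β : ℝ) : cCoef α β 0 = 1 := by simp [cCoef, rCoef_zero]

section

variable {α β : ℝ}

lemma cCoef_nonneg (hα : 0 ≤ α) (hβ : 0 ≤ β) (m : ℕ) : 0 ≤ cCoef α β m :=
  sum_nonneg fun i _ => by have := rCoef_pos (m - i); have := rCoef_pos i; positivity

lemma pow_mul_rCoef_le_cCoef (hα : 0 ≤ α) (hβ : 0 ≤ β) (m : ℕ) :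
    α ^ m * rCoef m ≤ cCoef α β m := by
  have := single_le_sum (f := fun i => α ^ (m - i) * rCoef (m - i) * rCoef i * β ^ i)
    (fun i _ => by have := rCoef_pos (m - i); have := rCoef_pos i; positivity)
    (mem_range.mpr m.succ_pos)
  simpa [cCoef, rCoef_zero] using this

lemma sum_range_pow_mul_pow_le (hβ : 0 ≤ β) (hβα : β < α) (m : ℕ) :
    ∑ i ∈ range (m + 1), α ^ (m - i) * β ^ i ≤ α ^ (m + 1) / (α - β) := by
  have h : (∑ i ∈ range (m + 1), α ^ (m - i) * β ^ i) * (α - β) =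
      α ^ (m + 1) - β ^ (m + 1) := by
    rw [← geom_sum₂_mul, geom_sum₂_comm]
    simp [mul_comm]
  rw [le_div_iff₀ (sub_pos.mpr hβα), h]
  linarith [pow_nonneg hβ (m + 1)]

lemma cCoef_le (hβ : 0 ≤ β) (hβα : β < α) (m : ℕ) :
    cCoef α β m ≤ rCoef m * (α ^ (m + 1) / (α - β)) := by
  have hα : 0 ≤ α := hβ.trans hβα.le
  calc cCoef α β m ≤ ∑ i ∈ range (m + 1), rCoef m * (α ^ (m - i) * β ^ i) := by
        refine sum_le_sum fun i hi => ?_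
        have hr := rCoef_mul_le (m - i) i
        rw [Nat.sub_add_cancel (Nat.lt_succ_iff.mp (mem_range.mp hi))] at hr
        calc α ^ (m - i) * rCoef (m - i) * rCoef i * β ^ i
            = rCoef (m - i) * rCoef i * (α ^ (m - i) * β ^ i) := by ring
          _ ≤ rCoef m * (α ^ (m - i) * β ^ i) := by gcongr
    _ = rCoef m * ∑ i ∈ range (m + 1), α ^ (m - i) * β ^ i := (mul_sum ..).symm
    _ ≤ rCoef m * (α ^ (m + 1) / (α - β)) := by
        gcongr
        · exact (rCoef_pos m).le
        · exact sum_range_pow_mul_pow_le hβ hβα m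

lemma sq_cCoef_le (hβ : 0 ≤ β) (hβα : β < α) (m : ℕ) :
    cCoef α β m ^ 2 ≤ (α ^ 2) ^ (m + 1) / ((m : ℝ) + 1) / (α - β) ^ 2 := by
  calc cCoef α β m ^ 2 ≤ (rCoef m * (α ^ (m + 1) / (α - β))) ^ 2 :=
        pow_le_pow_left₀ (cCoef_nonneg (hβ.trans hβα.le) hβ m) (cCoef_le hβ hβα m) 2
    _ = rCoef m ^ 2 * ((α ^ 2) ^ (m + 1) / (α - β) ^ 2) := by
        rw [mul_pow, div_pow, ← pow_mul, ← pow_mul, mul_comm (m + 1) 2]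
    _ ≤ ((m : ℝ) + 1)⁻¹ * ((α ^ 2) ^ (m + 1) / (α - β) ^ 2) := by
        gcongr
        exact rCoef_sq_le_inv_succ m
    _ = (α ^ 2) ^ (m + 1) / ((m : ℝ) + 1) / (α - β) ^ 2 := by ring

lemma sum_sq_cCoef_le (hβ : 0 ≤ β) (hβα : β < α) (j : ℕ) :
    ∑ i ∈ range j, cCoef α β i ^ 2 ≤
      (∑ i ∈ range j, (α ^ 2) ^ (i + 1) / ((i : ℝ) + 1)) / (α - β) ^ 2 := by
  rw [sum_div]
  exact sum_le_sum fun i _ => sq_cCoef_le hβ hβα i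

end

lemma harmonic_div_four_le_sum_sq_cCoef_one {β : ℝ} (hβ : 0 ≤ β) (j : ℕ) :
    (harmonic j : ℝ) / 4 ≤ ∑ i ∈ range j, cCoef 1 β i ^ 2 := by
  rw [← sum_range_inv_succ_eq_harmonic, sum_div]
  refine sum_le_sum fun i _ => ?_
  have hi : (0 : ℝ) ≤ i := i.cast_nonneg
  calc ((i : ℝ) + 1)⁻¹ / 4 ≤ (4 * (i : ℝ) + 1)⁻¹ := by
        rw [div_eq_mul_inv, ← mul_inv]
        gcongr
        linarith
    _ ≤ rCoef i ^ 2 := inv_four_mul_add_one_le_rCoef_sq i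
    _ ≤ cCoef 1 β i ^ 2 := by
        gcongr
        · exact (rCoef_pos i).le
        · simpa using pow_mul_rCoef_le_cCoef zero_le_one hβ i

theorem sum_sq_cCoef_bounds_general (α β : ℝ) (hβ : 0 ≤ β) (hβα : β < α) :
    ∀ j : ℕ, 1 ≤ j →
      (α = 1 →
        Real.log (j + 1) / 4 ≤ ∑ i ∈ Finset.range j, cCoef α β i ^ 2 ∧
          ∑ i ∈ Finset.range j, cCoef α β i ^ 2 ≤ (1 + Real.log j) / (1 - β) ^ 2) ∧
      (α < 1 →
        1 ≤ ∑ i ∈ Finset.range j, cCoef α β i ^ 2 ∧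
          ∑ i ∈ Finset.range j, cCoef α β i ^ 2 ≤
            (1 / (α - β) ^ 2) * Real.log (1 / (1 - α ^ 2))) := by
  intro j hj
  have hupper := sum_sq_cCoef_le hβ hβα j
  refine ⟨fun hα => ?_, fun hα => ⟨?_, ?_⟩⟩
  · subst hα
    simp only [one_pow, ← inv_eq_one_div, sum_range_inv_succ_eq_harmonic] at hupper
    refine ⟨le_trans ?_ (harmonic_div_four_le_sum_sq_cCoef_one hβ j), hupper.trans ?_⟩
    · gcongr
      exact_mod_cast log_add_one_le_harmonic j
    · gcongr
      exact harmonic_le_one_add_log j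
  · simpa [cCoef_zero] using
      single_le_sum (fun i _ => sq_nonneg (cCoef α β i)) (mem_range.mpr hj)
  · have hlog := sum_le_hasSum (range j) (fun i _ => by positivity)
      (hasSum_pow_div_log_of_abs_lt_one (x := α ^ 2)
        (by rw [abs_of_nonneg (sq_nonneg α)]; nlinarith))
    calc ∑ i ∈ range j, cCoef α β i ^ 2 ≤ -log (1 - α ^ 2) / (α - β) ^ 2 :=
          hupper.trans (div_le_div_of_nonneg_right hlog (by positivity))
      _ = 1 / (α - β) ^ 2 * log (1 / (1 - α ^ 2)) := by
          rw [one_div (1 - α ^ 2), log_inv]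
          ring

/-- bounds on the partial sums of squares of the `c_i`. -/
theorem sum_sq_cCoef_bounds (α β : ℝ) (hβ : 0 ≤ β) (hβα : β < α) (hα : α ≤ 1) :
    ∀ j : ℕ, 1 ≤ j →
      (α = 1 →
        Real.log (j + 1) / 4 ≤ ∑ i ∈ Finset.range j, cCoef α β i ^ 2 ∧
          ∑ i ∈ Finset.range j, cCoef α β i ^ 2 ≤ (1 + Real.log j) / (1 - β) ^ 2) ∧
      (α < 1 →
        1 ≤ ∑ i ∈ Finset.range j, cCoef α β i ^ 2 ∧
          ∑ i ∈ Finset.range j, cCoef α β i ^ 2 ≤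
            (1 / (α - β) ^ 2) * Real.log (1 / (1 - α ^ 2))) :=
  sum_sq_cCoef_bounds_general α β hβ hβα
end

section
/- Let n ≥ 1, 0 ≤ β < α ≤ 1, let b be an integer with 1 ≤ b ≤ n and k an integer with 1 ≤ k ≤ n/b. The baseline factorizations of A_{α,β} satisfy: (i) 𝓔(A_{α,β}, Id) = (1/√n)·sens_{k,b}(Id)·‖A_{α,β}‖_F is at least √(n·k/2) if α = 1, and at least √k if α < 1; (ii) 𝓔(Id, A_{α,β}) = (1/√n)·sens_{k,b}(A_{α,β})·‖Id‖_F is at least k·√n/√3 if α = 1, and at least √k if α < 1. -/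
/-
The identity has Frobenius norm `√n`, and `A_{α,β}` has unit diagonal and nonnegative entries,
so its Frobenius norm is at least `√n`; for `α = 1` every entry on or below the diagonal is at
least `1`, which gives `‖A‖_F² ≥ n(n+1)/2`. All sensitivities are bounded below by the
participation pattern `π = {0, b, …, (k-1)b}`. For a matrix with unit diagonal and nonnegative
entries the Gram sum over `π` is at least `|π| = k`. For `A_{1,β}` it equals
`Σ_l (Σ_{i∈π} A[l,i])²`, and the inner sum is at least the number of `i ∈ π` with `i ≤ l`,
which is at least `k(l+1)/n` because `kb ≤ n`; summing squares gives `k² n / 3`.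
-/

open Finset Matrix

/-- `a_m = Σ_{t=0}^{m} α^t β^{m−t}`. -/
noncomputable def aCoef (α β : ℝ) (m : ℕ) : ℝ :=
  ∑ t ∈ Finset.range (m + 1), α ^ t * β ^ (m - t)

/-- The SGD workload matrix `A_{α,β}`. -/
noncomputable def Amat (n : ℕ) (α β : ℝ) : Matrix (Fin n) (Fin n) ℝ :=
  Matrix.of fun i j => if (j : ℕ) ≤ (i : ℕ) then aCoef α β ((i : ℕ) - (j : ℕ)) else 0

/-- The `b`-min-separated `L2`-sensitivity with at most `k` participations. -/
noncomputable def sens (n b k : ℕ) (C : Matrix (Fin n) (Fin n) ℝ) : ℝ :=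
  Real.sqrt (sSup { x : ℝ | ∃ π : Finset (Fin n), π.card ≤ k ∧
    (∀ i ∈ π, ∀ j ∈ π, i ≠ j → b ≤ Nat.dist (i : ℕ) (j : ℕ)) ∧
    x = ∑ i ∈ π, ∑ j ∈ π, (Cᵀ * C) i j })

/-- The Frobenius norm. -/
noncomputable def frob (n : ℕ) (C : Matrix (Fin n) (Fin n) ℝ) : ℝ :=
  Real.sqrt (∑ i : Fin n, ∑ j : Fin n, (C i j) ^ 2)

section GramSum

variable {m R : Type*} [Fintype m] [CommSemiring R]

lemma sum_sum_transpose_mul_self_apply (C : Matrix m m R) (π : Finset m) :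
    ∑ i ∈ π, ∑ j ∈ π, (Cᵀ * C) i j = ∑ l, (∑ i ∈ π, C l i) ^ 2 := by
  simp only [mul_apply, transpose_apply, sq, sum_mul_sum]
  rw [sum_congr rfl fun _ _ => sum_comm, sum_comm]

lemma card_le_sum_sum_transpose_mul_self {C : Matrix m m ℝ} (hC : ∀ i j, 0 ≤ C i j)
    (hdiag : ∀ i, C i i = 1) (π : Finset m) :
    (π.card : ℝ) ≤ ∑ i ∈ π, ∑ j ∈ π, (Cᵀ * C) i j := by
  have hgram_nonneg : ∀ i j, 0 ≤ (Cᵀ * C) i j := fun i j =>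
    sum_nonneg fun l _ => mul_nonneg (hC l i) (hC l j)
  have hgram_diag : ∀ i, 1 ≤ (Cᵀ * C) i i := fun i => by
    simpa [mul_apply, hdiag] using
      single_le_sum (f := fun l => Cᵀ i l * C l i) (fun l _ => mul_nonneg (hC l i) (hC l i))
        (mem_univ i)
  rw [card_eq_sum_ones, Nat.cast_sum, Nat.cast_one]
  exact sum_le_sum fun i hi => (hgram_diag i).trans
    (single_le_sum (fun j _ => hgram_nonneg i j) hi)

end GramSum

lemma sq_le_two_mul_sum_range (n : ℕ) : (n : ℝ) ^ 2 ≤ 2 * ∑ l ∈ range n, ((l : ℝ) + 1) := by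
  induction n with
  | zero => simp
  | succ n ih => rw [sum_range_succ]; push_cast; nlinarith

lemma cube_le_three_mul_sum_range_sq (n : ℕ) :
    (n : ℝ) ^ 3 ≤ 3 * ∑ l ∈ range n, ((l : ℝ) + 1) ^ 2 := by
  induction n with
  | zero => simp
  | succ n ih => rw [sum_range_succ]; push_cast; nlinarith [n.cast_nonneg (α := ℝ)]

lemma card_filter_mul_le_range {b : ℕ} (hb : 0 < b) (k l : ℕ) :
    ((range k).filter fun j => j * b ≤ l).card = min k (l / b + 1) := by
  rw [← card_range (min k _)]
  congr 1
  ext j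
  simp only [mem_filter, mem_range, lt_min_iff, Nat.lt_succ_iff, Nat.le_div_iff_mul_le hb]

lemma mul_succ_le_min_mul {b k n l : ℕ} (hb : 0 < b) (hkb : k * b ≤ n) (hl : l < n) :
    k * (l + 1) ≤ min k (l / b + 1) * n := by
  rcases le_total k (l / b + 1) with h | h
  · rw [min_eq_left h]
    exact Nat.mul_le_mul_left k hl
  · rw [min_eq_right h]
    calc k * (l + 1) ≤ k * (b * (l / b + 1)) := Nat.mul_le_mul_left k (Nat.lt_mul_div_succ l hb)
      _ = (l / b + 1) * (k * b) := by ring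
      _ ≤ (l / b + 1) * n := Nat.mul_le_mul_left _ hkb

section Workload

lemma aCoef_nonneg {α β : ℝ} (hα : 0 ≤ α) (hβ : 0 ≤ β) (m : ℕ) : 0 ≤ aCoef α β m := by
  unfold aCoef; positivity

lemma one_le_aCoef_one {β : ℝ} (hβ : 0 ≤ β) (m : ℕ) : 1 ≤ aCoef 1 β m := by
  simpa [aCoef] using single_le_sum (f := fun t => (1 : ℝ) ^ t * β ^ (m - t))
    (fun t _ => by positivity) (self_mem_range_succ m)

variable {n : ℕ} {α β : ℝ}

lemma Amat_nonneg (hα : 0 ≤ α) (hβ : 0 ≤ β) (i j : Fin n) : 0 ≤ Amat n α β i j := by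
  simp only [Amat, of_apply]
  split_ifs
  exacts [aCoef_nonneg hα hβ _, le_rfl]

lemma Amat_self (i : Fin n) : Amat n α β i i = 1 := by
  simp [Amat, aCoef]

lemma one_le_Amat_one (hβ : 0 ≤ β) {i j : Fin n} (hji : j ≤ i) : 1 ≤ Amat n 1 β i j := by
  rw [Amat, of_apply, if_pos (Fin.le_def.1 hji)]
  exact one_le_aCoef_one hβ _

end Workload

section Frobenius

variable {n : ℕ}

lemma frob_one : frob n 1 = Real.sqrt n := by
  simp [frob, one_apply, apply_ite (· ^ 2 : ℝ → ℝ)]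

lemma sqrt_le_frob_of_diag {C : Matrix (Fin n) (Fin n) ℝ} (hdiag : ∀ i, C i i = 1) :
    Real.sqrt n ≤ frob n C := by
  refine Real.sqrt_le_sqrt ?_
  calc (n : ℝ) = ∑ i, C i i ^ 2 := by simp [hdiag]
    _ ≤ ∑ i, ∑ j, C i j ^ 2 := sum_le_sum fun i _ =>
      single_le_sum (f := fun j => C i j ^ 2) (fun j _ => sq_nonneg _) (mem_univ i)

lemma sqrt_le_frob_Amat_one {β : ℝ} (hβ : 0 ≤ β) :
    Real.sqrt ((n : ℝ) ^ 2 / 2) ≤ frob n (Amat n 1 β) := by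
  refine Real.sqrt_le_sqrt ?_
  have hrow : ∀ i : Fin n, (i : ℝ) + 1 ≤ ∑ j, Amat n 1 β i j ^ 2 := fun i =>
    calc (i : ℝ) + 1 = ∑ _j ∈ Iic i, (1 : ℝ) := by simp [Fin.card_Iic]
      _ ≤ ∑ j ∈ Iic i, Amat n 1 β i j ^ 2 := sum_le_sum fun j hj =>
        one_le_pow₀ (one_le_Amat_one hβ (mem_Iic.1 hj))
      _ ≤ ∑ j, Amat n 1 β i j ^ 2 :=
        sum_le_sum_of_subset_of_nonneg (subset_univ _) fun _ _ _ => sq_nonneg _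
  calc (n : ℝ) ^ 2 / 2 ≤ ∑ l ∈ range n, ((l : ℝ) + 1) := by
        linarith [sq_le_two_mul_sum_range n]
    _ = ∑ i : Fin n, ((i : ℝ) + 1) := (Fin.sum_univ_eq_sum_range (fun l => (l : ℝ) + 1) n).symm
    _ ≤ ∑ i, ∑ j, Amat n 1 β i j ^ 2 := sum_le_sum fun i _ => hrow i

end Frobenius

section Sensitivity

variable {n b k : ℕ}

lemma sqrt_le_sens (C : Matrix (Fin n) (Fin n) ℝ) {π : Finset (Fin n)} (hcard : π.card ≤ k)
    (hsep : ∀ i ∈ π, ∀ j ∈ π, i ≠ j → b ≤ Nat.dist (i : ℕ) (j : ℕ)) :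
    Real.sqrt (∑ i ∈ π, ∑ j ∈ π, (Cᵀ * C) i j) ≤ sens n b k C := by
  refine Real.sqrt_le_sqrt (le_csSup ?_ ⟨π, hcard, hsep, rfl⟩)
  refine (Set.finite_range fun π : Finset (Fin n) => ∑ i ∈ π, ∑ j ∈ π, (Cᵀ * C) i j).bddAbove.mono
    ?_
  rintro _ ⟨π, -, -, rfl⟩
  exact ⟨π, rfl⟩

def strideEmbedding (hb : 0 < b) (hkb : k * b ≤ n) : Fin k ↪ Fin n where
  toFun j := ⟨j * b, (Nat.mul_lt_mul_of_pos_right j.isLt hb).trans_le hkb⟩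
  inj' _ _ h := Fin.ext (Nat.eq_of_mul_eq_mul_right hb (Fin.val_eq_of_eq h))

lemma strideEmbedding_separated (hb : 0 < b) (hkb : k * b ≤ n) :
    ∀ i ∈ univ.map (strideEmbedding hb hkb), ∀ j ∈ univ.map (strideEmbedding hb hkb),
      i ≠ j → b ≤ Nat.dist (i : ℕ) (j : ℕ) := by
  simp only [mem_map, mem_univ, true_and]
  rintro _ ⟨p, rfl⟩ _ ⟨q, rfl⟩ hpq
  have hdist : 1 ≤ Nat.dist p q :=
    Nat.pos_of_ne_zero fun h => hpq (congrArg _ (Fin.ext (Nat.eq_of_dist_eq_zero h)))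
  change b ≤ Nat.dist (p * b) (q * b)
  rw [Nat.dist_mul_right]
  exact Nat.le_mul_of_pos_left b hdist

lemma sqrt_le_sens_stride (hb : 0 < b) (hkb : k * b ≤ n) (C : Matrix (Fin n) (Fin n) ℝ) :
    Real.sqrt (∑ i ∈ univ.map (strideEmbedding hb hkb), ∑ j ∈ univ.map (strideEmbedding hb hkb),
      (Cᵀ * C) i j) ≤ sens n b k C :=
  sqrt_le_sens C (by simp) (strideEmbedding_separated hb hkb)

lemma sqrt_le_sens_of_nonneg_of_diag (hb : 0 < b) (hkb : k * b ≤ n)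
    {C : Matrix (Fin n) (Fin n) ℝ} (hC : ∀ i j, 0 ≤ C i j)
    (hdiag : ∀ i, C i i = 1) : Real.sqrt k ≤ sens n b k C := by
  refine (Real.sqrt_le_sqrt ?_).trans (sqrt_le_sens_stride hb hkb C)
  simpa using card_le_sum_sum_transpose_mul_self hC hdiag (univ.map (strideEmbedding hb hkb))

lemma mul_succ_div_le_sum_Amat_one_stride (hb : 0 < b) (hkb : k * b ≤ n) {β : ℝ} (hβ : 0 ≤ β)
    (l : Fin n) :
    (k : ℝ) * (l + 1) / n ≤ ∑ j, Amat n 1 β l (strideEmbedding hb hkb j) := by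
  have hcount : ∑ j : Fin k, (if (j : ℕ) * b ≤ l then (1 : ℝ) else 0) = min k (l / b + 1) := by
    rw [Fin.sum_univ_eq_sum_range (fun j => if j * b ≤ (l : ℕ) then (1 : ℝ) else 0), sum_boole,
      card_filter_mul_le_range hb]
  have hn : (0 : ℝ) < n := by exact_mod_cast l.pos
  calc (k : ℝ) * (l + 1) / n ≤ min k (l / b + 1) := by
        rw [div_le_iff₀ hn]
        exact_mod_cast mul_succ_le_min_mul hb hkb l.isLt
    _ = ∑ j : Fin k, (if (j : ℕ) * b ≤ l then (1 : ℝ) else 0) := hcount.symm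
    _ ≤ ∑ j, Amat n 1 β l (strideEmbedding hb hkb j) := sum_le_sum fun j _ => by
        split_ifs with h
        · exact one_le_Amat_one hβ (Fin.le_def.2 h)
        · exact Amat_nonneg zero_le_one hβ _ _

lemma sqrt_le_sens_Amat_one (hb : 0 < b) (hkb : k * b ≤ n) {β : ℝ} (hβ : 0 ≤ β) :
    Real.sqrt ((k : ℝ) ^ 2 * n / 3) ≤ sens n b k (Amat n 1 β) := by
  refine (Real.sqrt_le_sqrt ?_).trans (sqrt_le_sens_stride hb hkb _)
  rw [sum_sum_transpose_mul_self_apply]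
  simp only [sum_map]
  obtain rfl | hn := n.eq_zero_or_pos
  · simp
  calc (k : ℝ) ^ 2 * n / 3 = ((k : ℝ) / n) ^ 2 * ((n : ℝ) ^ 3 / 3) := by field_simp
    _ ≤ ((k : ℝ) / n) ^ 2 * ∑ l ∈ range n, ((l : ℝ) + 1) ^ 2 := by
        gcongr; linarith [cube_le_three_mul_sum_range_sq n]
    _ = ∑ l : Fin n, ((k : ℝ) * (l + 1) / n) ^ 2 := by
        rw [Fin.sum_univ_eq_sum_range (fun l => ((k : ℝ) * (l + 1) / n) ^ 2), mul_sum]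
        exact sum_congr rfl fun _ _ => by ring
    _ ≤ ∑ l, (∑ j, Amat n 1 β l (strideEmbedding hb hkb j)) ^ 2 := sum_le_sum fun l _ =>
        pow_le_pow_left₀ (by positivity) (mul_succ_div_le_sum_Amat_one_stride hb hkb hβ l) 2

end Sensitivity

lemma sqrt_mul_div_le_inv_sqrt_mul_mul {n : ℕ} {p q s f : ℝ} (hp : 0 ≤ p) (hs : Real.sqrt p ≤ s)
    (hf : Real.sqrt q ≤ f) : Real.sqrt (p * q / n) ≤ 1 / Real.sqrt n * s * f := by
  rw [Real.sqrt_div' _ n.cast_nonneg, Real.sqrt_mul hp, mul_assoc, one_div_mul_eq_div]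
  exact div_le_div_of_nonneg_right
    (mul_le_mul hs hf (Real.sqrt_nonneg q) ((Real.sqrt_nonneg p).trans hs)) (Real.sqrt_nonneg n)

theorem baseline_factorization_lower_bounds_general (n b k : ℕ)
    (hk : 1 ≤ k) (hkn : k ≤ n / b)
    (α β : ℝ) (hβ : 0 ≤ β) (hβα : β < α) :
    ((α = 1 →
        Real.sqrt ((n : ℝ) * k / 2) ≤
          (1 / Real.sqrt n) * sens n b k (1 : Matrix (Fin n) (Fin n) ℝ) *
            frob n (Amat n α β)) ∧
      (α < 1 →
        Real.sqrt k ≤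
          (1 / Real.sqrt n) * sens n b k (1 : Matrix (Fin n) (Fin n) ℝ) *
            frob n (Amat n α β))) ∧
    ((α = 1 →
        (k : ℝ) * Real.sqrt n / Real.sqrt 3 ≤
          (1 / Real.sqrt n) * sens n b k (Amat n α β) *
            frob n (1 : Matrix (Fin n) (Fin n) ℝ)) ∧
      (α < 1 →
        Real.sqrt k ≤
          (1 / Real.sqrt n) * sens n b k (Amat n α β) *
            frob n (1 : Matrix (Fin n) (Fin n) ℝ))) := by
  have hb : 0 < b := Nat.pos_of_ne_zero fun hb => by simp [hb] at hkn; omega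
  have hkb : k * b ≤ n := (Nat.le_div_iff_mul_le hb).1 hkn
  have hn : (n : ℝ) ≠ 0 := by exact_mod_cast (Nat.mul_pos hk hb).trans_le hkb |>.ne'
  have hsens_one : Real.sqrt k ≤ sens n b k 1 :=
    sqrt_le_sens_of_nonneg_of_diag hb hkb (fun i j => by simp only [one_apply]; split_ifs <;> simp)
      (fun _ => one_apply_eq _)
  have hfrob_one : Real.sqrt n ≤ frob n 1 := frob_one.ge
  have hsqrt_k : Real.sqrt k = Real.sqrt (k * n / n) := by rw [mul_div_cancel_right₀ _ hn]
  refine ⟨⟨fun hα => ?_, fun _ => ?_⟩, ⟨fun hα => ?_, fun _ => ?_⟩⟩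
  · subst hα
    calc Real.sqrt (n * k / 2) = Real.sqrt (k * (n ^ 2 / 2) / n) := by congr 1; field_simp
      _ ≤ _ := sqrt_mul_div_le_inv_sqrt_mul_mul k.cast_nonneg hsens_one (sqrt_le_frob_Amat_one hβ)
  · rw [hsqrt_k]
    exact sqrt_mul_div_le_inv_sqrt_mul_mul k.cast_nonneg hsens_one (sqrt_le_frob_of_diag Amat_self)
  · subst hα
    calc (k : ℝ) * Real.sqrt n / Real.sqrt 3 = Real.sqrt (k ^ 2 * n / 3 * n / n) := by
          rw [mul_div_cancel_right₀ _ hn, Real.sqrt_div' _ zero_le_three,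
            Real.sqrt_mul' _ n.cast_nonneg, Real.sqrt_sq k.cast_nonneg]
      _ ≤ _ := sqrt_mul_div_le_inv_sqrt_mul_mul (by positivity) (sqrt_le_sens_Amat_one hb hkb hβ)
          hfrob_one
  · rw [hsqrt_k]
    have hα : 0 ≤ α := hβ.trans hβα.le
    exact sqrt_mul_div_le_inv_sqrt_mul_mul k.cast_nonneg
      (sqrt_le_sens_of_nonneg_of_diag hb hkb (Amat_nonneg hα hβ) Amat_self) hfrob_one

/-- lower bounds for the baseline factorizations
`A_{α,β} = A_{α,β}·Id` and `A_{α,β} = Id·A_{α,β}`. -/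
theorem baseline_factorization_lower_bounds (n b k : ℕ) (hn : 1 ≤ n)
    (hb : 1 ≤ b) (hbn : b ≤ n) (hk : 1 ≤ k) (hkn : k ≤ n / b)
    (α β : ℝ) (hβ : 0 ≤ β) (hβα : β < α) (hα : α ≤ 1) :
    ((α = 1 →
        Real.sqrt ((n : ℝ) * k / 2) ≤
          (1 / Real.sqrt n) * sens n b k (1 : Matrix (Fin n) (Fin n) ℝ) *
            frob n (Amat n α β)) ∧
      (α < 1 →
        Real.sqrt k ≤
          (1 / Real.sqrt n) * sens n b k (1 : Matrix (Fin n) (Fin n) ℝ) *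
            frob n (Amat n α β))) ∧
    ((α = 1 →
        (k : ℝ) * Real.sqrt n / Real.sqrt 3 ≤
          (1 / Real.sqrt n) * sens n b k (Amat n α β) *
            frob n (1 : Matrix (Fin n) (Fin n) ℝ)) ∧
      (α < 1 →
        Real.sqrt k ≤
          (1 / Real.sqrt n) * sens n b k (Amat n α β) *
            frob n (1 : Matrix (Fin n) (Fin n) ℝ))) :=
  baseline_factorization_lower_bounds_general n b k hk hkn α β hβ hβα
end
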